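/- arXiv:2507.16806 — 3 statements merged into one kernel-verified Lean document; each statement's English description precedes it below -/
import Mathlib

section
/- Let S be a scoring rule satisfying the Savage representation with nonnegative weight ω (S'(p,1) = -(1-p)ω(p), S'(p,0) = p·ω(p)), and suppose S(p,1) - S(p,0) ≤ λ for all p ∈ [0,1]. Then W(p) = λp - p·S(p,1) - (1-p)·S(p,0) is nondecreasing on [0,1]; hence calibrated predictions with higher success probability achieve higher expected reward. -/
/-- If S satisfies the Savage representation with nonnegative weight and the
discrepancy S(p,1) - S(p,0) is bounded by λ on [0,1], then
W(p) = λp - p·S(p,1) - (1-p)·S(p,0) is nondecreasing on [0,1]. -/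
theorem calibrated_reward_monotone (lam : ℝ) (hlam : 0 < lam)
    (S1 S0 ω : ℝ → ℝ)
    (hω : ∀ p ∈ Set.Ioo (0:ℝ) 1, 0 ≤ ω p)
    (hS1 : ∀ p ∈ Set.Ioo (0:ℝ) 1, HasDerivAt S1 (-(1 - p) * ω p) p)
    (hS0 : ∀ p ∈ Set.Ioo (0:ℝ) 1, HasDerivAt S0 (p * ω p) p)
    (hS1c : ContinuousOn S1 (Set.Icc (0:ℝ) 1))
    (hS0c : ContinuousOn S0 (Set.Icc (0:ℝ) 1))
    (hbound : ∀ p ∈ Set.Icc (0:ℝ) 1, S1 p - S0 p ≤ lam) :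
    MonotoneOn (fun p => lam * p - p * S1 p - (1 - p) * S0 p)
      (Set.Icc (0:ℝ) 1) := by
  set f : ℝ → ℝ := fun p => lam * p - p * S1 p - (1 - p) * S0 p with hf
  have hderiv : ∀ x ∈ Set.Ioo (0:ℝ) 1,
      HasDerivAt f (lam - (S1 x - S0 x)) x := by
    intro x hx
    have h1 := hS1 x hx
    have h0 := hS0 x hx
    have : HasDerivAt f
        (lam * 1 - (1 * S1 x + x * (-(1 - x) * ω x))
          - ((0 - 1) * S0 x + (1 - x) * (x * ω x))) x := by
      exact (((hasDerivAt_id x).const_mul lam).sub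
        ((hasDerivAt_id x).mul h1)).sub
        (((hasDerivAt_const x (1:ℝ)).sub (hasDerivAt_id x)).mul h0)
    convert this using 1
    ring
  have hcont : ContinuousOn f (Set.Icc (0:ℝ) 1) := by
    apply ContinuousOn.sub
    apply ContinuousOn.sub
    · exact (continuous_const.mul continuous_id).continuousOn
    · exact continuousOn_id.mul hS1c
    · exact ((continuous_const.sub continuous_id).continuousOn).mul hS0c
  have hint : interior (Set.Icc (0:ℝ) 1) = Set.Ioo (0:ℝ) 1 := interior_Icc
  apply monotoneOn_of_deriv_nonneg (convex_Icc 0 1) hcont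
  · intro x hx
    rw [hint] at hx
    exact (hderiv x hx).differentiableAt.differentiableWithinAt
  · intro x hx
    rw [hint] at hx
    rw [(hderiv x hx).deriv]
    have := hbound x (Set.Ioo_subset_Icc_self hx)
    linarith
end

section
/- With the logarithmic score and any finite λ > 0, the correctness incentive fails: there exist p > p' in (0,1) such that W(p) < W(p'), where W(p) = λp - p·(-log p) - (1-p)·(-log(1-p)). Concretely, W is not monotone on (0,1) since W'(p) = λ + log p - log(1-p) < 0 for p sufficiently small. -/
/-!
`W(p) = λ p - H(p)` with `H` the binary entropy, so `W'(p) = λ + log p - log (1 - p)`.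
As `p → 0⁺` the term `log p` drives `W'` to `-∞` whatever `λ` is, so `W` is strictly
decreasing on some interval `(0, ε)`, and any two points of it witness the failure of
monotonicity.
-/

open Real Filter Topology Set

lemma mul_add_mul_log_add_mul_log_one_sub (lam p : ℝ) :
    lam * p + p * log p + (1 - p) * log (1 - p) = lam * p - binEntropy p := by
  simp only [binEntropy, log_inv]
  ring

lemma hasDerivAt_mul_sub_binEntropy (lam : ℝ) {p : ℝ} (hp₀ : p ≠ 0) (hp₁ : p ≠ 1) :
    HasDerivAt (fun x ↦ lam * x - binEntropy x) (lam + log p - log (1 - p)) p :=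
  (((hasDerivAt_id' p).const_mul lam).sub (hasDerivAt_binEntropy hp₀ hp₁)).congr_deriv (by ring)

lemma tendsto_add_log_sub_log_one_sub_nhdsGT_zero (lam : ℝ) :
    Tendsto (fun p ↦ lam + log p - log (1 - p)) (𝓝[>] 0) atBot := by
  have hlog_one_sub : Tendsto (fun p ↦ -log (1 - p)) (𝓝[>] 0) (𝓝 (-log (1 - 0))) :=
    ((continuousAt_const.sub continuousAt_id).log (by norm_num)).neg.tendsto.mono_left
      nhdsWithin_le_nhds
  simpa only [sub_eq_add_neg] using
    (tendsto_atBot_add_const_left _ lam tendsto_log_nhdsGT_zero).atBot_add hlog_one_sub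

lemma exists_forall_Ioo_add_log_sub_log_one_sub_neg (lam : ℝ) :
    ∃ ε > 0, ∀ p ∈ Ioo 0 ε, lam + log p - log (1 - p) < 0 :=
  mem_nhdsGT_iff_exists_Ioo_subset.1
    ((tendsto_add_log_sub_log_one_sub_nhdsGT_zero lam).eventually_lt_atBot 0)

lemma strictAntiOn_mul_sub_binEntropy {lam ε : ℝ} (hε : ε ≤ 1)
    (hneg : ∀ p ∈ Ioo 0 ε, lam + log p - log (1 - p) < 0) :
    StrictAntiOn (fun x ↦ lam * x - binEntropy x) (Ioo 0 ε) := by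
  have hderiv : ∀ p ∈ Ioo 0 ε,
      HasDerivAt (fun x ↦ lam * x - binEntropy x) (lam + log p - log (1 - p)) p :=
    fun p hp ↦ hasDerivAt_mul_sub_binEntropy lam hp.1.ne' (hp.2.trans_le hε).ne
  refine strictAntiOn_of_hasDerivWithinAt_neg (f' := fun p ↦ lam + log p - log (1 - p))
    (convex_Ioo 0 ε) (fun p hp ↦ (hderiv p hp).continuousAt.continuousWithinAt)
    (fun p hp ↦ ?_) (by simpa only [interior_Ioo] using hneg)
  rw [interior_Ioo] at hp ⊢
  exact (hderiv p hp).hasDerivWithinAt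

theorem log_score_correctness_fails_general (lam : ℝ) :
    (∃ p ∈ Set.Ioo (0:ℝ) 1, ∃ p' ∈ Set.Ioo (0:ℝ) 1, p' < p ∧
      lam * p + p * Real.log p + (1 - p) * Real.log (1 - p)
        < lam * p' + p' * Real.log p' + (1 - p') * Real.log (1 - p')) ∧
    (∃ ε > (0:ℝ), ∀ p ∈ Set.Ioo (0:ℝ) ε,
      lam + Real.log p - Real.log (1 - p) < 0) := by
  obtain ⟨ε, hε, hneg⟩ := exists_forall_Ioo_add_log_sub_log_one_sub_neg lam
  refine ⟨?_, ε, hε, hneg⟩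
  set δ := min ε 1
  have hδ : 0 < δ := lt_min hε one_pos
  have hanti := strictAntiOn_mul_sub_binEntropy (min_le_right ε 1)
    fun p hp ↦ hneg p ⟨hp.1, hp.2.trans_le (min_le_left ε 1)⟩
  have hsmall : Ioo 0 δ ⊆ Ioo 0 1 := Ioo_subset_Ioo_right (min_le_right ε 1)
  have hp : δ / 2 ∈ Ioo 0 δ := ⟨by positivity, by linarith⟩
  have hp' : δ / 4 ∈ Ioo 0 δ := ⟨by positivity, by linarith⟩
  refine ⟨δ / 2, hsmall hp, δ / 4, hsmall hp', by linarith, ?_⟩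
  simpa only [mul_add_mul_log_add_mul_log_one_sub] using hanti hp' hp (by linarith)

/-- With the logarithmic score and any finite λ > 0, the correctness incentive
fails: W(p) = λp + p log p + (1-p) log(1-p) is not monotone; there exist
p' < p in (0,1) with W(p) < W(p'), and W'(p) = λ + log p - log(1-p) < 0 for p
sufficiently small. -/
theorem log_score_correctness_fails (lam : ℝ) (hlam : 0 < lam) :
    (∃ p ∈ Set.Ioo (0:ℝ) 1, ∃ p' ∈ Set.Ioo (0:ℝ) 1, p' < p ∧
      lam * p + p * Real.log p + (1 - p) * Real.log (1 - p)
        < lam * p' + p' * Real.log p' + (1 - p') * Real.log (1 - p')) ∧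
    (∃ ε > (0:ℝ), ∀ p ∈ Set.Ioo (0:ℝ) ε,
      lam + Real.log p - Real.log (1 - p) < 0) :=
  log_score_correctness_fails_general lam
end

section
/- If S(p,1) - S(p,0) is bounded above on [0,1] by some constant M, then setting λ = M makes the reward R(c,q) = λc - S(q,c) satisfy the correctness incentive: for any p ≥ p' in [0,1], the optimal expected rewards satisfy W(p) ≥ W(p'), assuming S admits the Savage representation with nonnegative weight function. -/
/-- If S(p,1) - S(p,0) ≤ M on [0,1] and S admits the Savage representation with
nonnegative weight, then with λ = M the reward R(c,q) = λc - S(q,c) satisfies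
the correctness incentive: p' ≤ p implies W(p') ≤ W(p), where
W(p) = λp - p·S(p,1) - (1-p)·S(p,0). -/
theorem bounded_discrepancy_correctness_incentive (M : ℝ)
    (S1 S0 ω : ℝ → ℝ)
    (hω : ∀ p ∈ Set.Ioo (0:ℝ) 1, 0 ≤ ω p)
    (hS1 : ∀ p ∈ Set.Ioo (0:ℝ) 1, HasDerivAt S1 (-(1 - p) * ω p) p)
    (hS0 : ∀ p ∈ Set.Ioo (0:ℝ) 1, HasDerivAt S0 (p * ω p) p)
    (hS1c : ContinuousOn S1 (Set.Icc (0:ℝ) 1))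
    (hS0c : ContinuousOn S0 (Set.Icc (0:ℝ) 1))
    (hbound : ∀ p ∈ Set.Icc (0:ℝ) 1, S1 p - S0 p ≤ M) :
    ∀ p ∈ Set.Icc (0:ℝ) 1, ∀ p' ∈ Set.Icc (0:ℝ) 1, p' ≤ p →
      M * p' - p' * S1 p' - (1 - p') * S0 p'
        ≤ M * p - p * S1 p - (1 - p) * S0 p := by
  set W : ℝ → ℝ := fun p => M * p - p * S1 p - (1 - p) * S0 p with hW
  have hderiv : ∀ p ∈ Set.Ioo (0:ℝ) 1, HasDerivAt W (M - (S1 p - S0 p)) p := by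
    intro p hp
    have h1 := hS1 p hp
    have h0 := hS0 p hp
    have : HasDerivAt W
        (M * 1 - (1 * S1 p + p * (-(1 - p) * ω p)) -
          ((0 - 1) * S0 p + (1 - p) * (p * ω p))) p := by
      exact ((hasDerivAt_id p).const_mul M).sub
        (((hasDerivAt_id p).mul h1)) |>.sub
        (((hasDerivAt_const p (1:ℝ)).sub (hasDerivAt_id p)).mul h0)
    convert this using 1
    ring
  have hcont : ContinuousOn W (Set.Icc (0:ℝ) 1) := by
    apply ContinuousOn.sub
    apply ContinuousOn.sub
    · exact (continuous_const.mul continuous_id).continuousOn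
    · exact continuousOn_id.mul hS1c
    · exact (continuous_const.sub continuous_id).continuousOn.mul hS0c
  have hmono : MonotoneOn W (Set.Icc (0:ℝ) 1) := by
    apply monotoneOn_of_deriv_nonneg (convex_Icc 0 1) hcont
    · intro p hp
      rw [interior_Icc] at hp
      exact (hderiv p hp).differentiableAt.differentiableWithinAt
    · intro p hp
      rw [interior_Icc] at hp
      rw [(hderiv p hp).deriv]
      have := hbound p (Set.Ioo_subset_Icc_self hp)
      linarith
  intro p hp p' hp' hle
  exact hmono hp' hp hle
end
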